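/- Fix n ∈ ℕ and real numbers a, b. For h > 0 let b_n(h) and u_n(h) denote the continuous −1 Hahn (type 1) recurrence coefficients evaluated at parameters (α,β,γ) = (h, √(h/2)·b, (2a−1)/4). Then as h → ∞ one has b_n(h)/√(2h) → (−1)^n·b, and u_n(h)/(2h) → n/2 if n is even and u_n(h)/(2h) → (n+2a)/2 if n is odd. -/

import Mathlib

/-!
With `β = √(h/2)·b` the coefficient `bₙ` is `β` times a ratio of affine functions of `h` tending
to `2(-1)ⁿ`, and `2√(h/2) = √(2h)`. Write `D = n + 2α + 2γ + 1`. For odd `n` the factor `D²`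
cancels from `uₙ`, leaving a quadratic in `h`; for even `n` the squared modulus contributes
`|D + 4βi|²/D² = 1 + 8b²h/D²`, and `h/D² → 0`.
-/

open Filter

/-- The diagonal recurrence coefficient `bₙ` of the continuous `-1` Hahn polynomials
of the first type, parameters `(α,β,γ)`. -/
noncomputable def cM1Hahn1b (α β γ : ℝ) (n : ℕ) : ℝ :=
  if Even n then
    2 * β - 2 * β * (n : ℝ) / ((n : ℝ) + 2 * α + 2 * γ + 1)
  else
    2 * β - 2 * β * ((n : ℝ) + 4 * α + 4 * γ + 3) / ((n : ℝ) + 2 * α + 2 * γ + 2)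

/-- The off-diagonal recurrence coefficient `uₙ` of the continuous `-1` Hahn polynomials
of the first type, parameters `(α,β,γ)`; `|z|²` is the squared modulus `Complex.normSq`. -/
noncomputable def cM1Hahn1u (α β γ : ℝ) (n : ℕ) : ℝ :=
  if Even n then
    (n : ℝ) * ((n : ℝ) + 4 * α + 4 * γ + 2) *
        Complex.normSq (((n : ℝ) + 2 * α + 2 * γ + 1 : ℝ) + (4 * β : ℝ) * Complex.I) /
      (4 * ((n : ℝ) + 2 * α + 2 * γ + 1) ^ 2)
  else
    ((n : ℝ) + 4 * α + 1) * ((n : ℝ) + 4 * γ + 1) * ((n : ℝ) + 2 * α + 2 * γ + 1) ^ 2 /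
      (4 * ((n : ℝ) + 2 * α + 2 * γ + 1) ^ 2)

open Topology

theorem tendsto_affine_div_affine (c d k : ℝ) {m : ℝ} (hm : m ≠ 0) :
    Tendsto (fun x : ℝ => (c + k * x) / (d + m * x)) atTop (𝓝 (k / m)) := by
  have hinv := tendsto_inv_atTop_zero (𝕜 := ℝ)
  have hlim : Tendsto (fun x : ℝ => (c * x⁻¹ + k) / (d * x⁻¹ + m)) atTop
      (𝓝 ((c * 0 + k) / (d * 0 + m))) :=
    ((hinv.const_mul c).add_const k).div ((hinv.const_mul d).add_const m) (by simpa using hm)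
  simp only [mul_zero, zero_add] at hlim
  refine hlim.congr' ?_
  filter_upwards [eventually_ne_atTop 0] with x hx
  rw [← mul_div_mul_right _ _ hx]
  field_simp

theorem tendsto_const_add_mul_atTop (c : ℝ) {k : ℝ} (hk : 0 < k) :
    Tendsto (fun x : ℝ => c + k * x) atTop atTop :=
  tendsto_atTop_add_const_left _ _ (tendsto_id.const_mul_atTop hk)

theorem two_mul_sqrt_half (x : ℝ) : 2 * √(x / 2) = √(2 * x) := by
  rw [show 2 * x = 2 ^ 2 * (x / 2) by ring, Real.sqrt_mul (by positivity), Real.sqrt_sq two_pos.le]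

theorem cM1Hahn1b_eq_mul (α β γ : ℝ) (n : ℕ) :
    cM1Hahn1b α β γ n = β * cM1Hahn1b α 1 γ n := by
  unfold cM1Hahn1b
  split_ifs <;> ring

theorem tendsto_cM1Hahn1b_one (γ : ℝ) (n : ℕ) :
    Tendsto (fun α => cM1Hahn1b α 1 γ n) atTop (𝓝 (2 * (-1) ^ n)) := by
  rcases Nat.even_or_odd n with hn | hn
  · have h := (tendsto_affine_div_affine (2 * n) (n + 2 * γ + 1) 0 two_ne_zero).const_sub 2
    rw [hn.neg_one_pow]
    convert h using 2 with α
    · simp only [cM1Hahn1b, if_pos hn]; ring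
    · ring
  · have h := (tendsto_affine_div_affine (2 * (n + 4 * γ + 3)) (n + 2 * γ + 2) 8
      two_ne_zero).const_sub 2
    rw [hn.neg_one_pow]
    convert h using 2 with α
    · simp only [cM1Hahn1b, if_neg (Nat.not_even_iff_odd.mpr hn)]; ring
    · norm_num

theorem tendsto_cM1Hahn1u_div_of_even (b γ : ℝ) {n : ℕ} (hn : Even n) :
    Tendsto (fun α => cM1Hahn1u α (√(α / 2) * b) γ n / (2 * α)) atTop (𝓝 (n / 2)) := by
  set d := (n : ℝ) + 2 * γ + 1
  have hD := tendsto_const_add_mul_atTop d two_pos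
  have hlim :=
    ((tendsto_affine_div_affine (n + 4 * γ + 2) 0 4 one_ne_zero).const_mul (n / 8 : ℝ)).mul
    ((((tendsto_affine_div_affine 0 d 1 two_ne_zero).mul
      (tendsto_inv_atTop_zero.comp hD)).const_mul (8 * b ^ 2)).const_add 1)
  rw [show (n / 8 : ℝ) * (4 / 1) * (1 + 8 * b ^ 2 * (1 / 2 * 0)) = n / 2 by ring] at hlim
  refine hlim.congr' ?_
  filter_upwards [eventually_gt_atTop 0, hD.eventually_ne_atTop 0] with α hα hDα
  have hβ : (4 * (√(α / 2) * b)) ^ 2 = 8 * b ^ 2 * α := by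
    rw [mul_pow, mul_pow, Real.sq_sqrt (by positivity)]; ring
  simp only [cM1Hahn1u, if_pos hn, Complex.normSq_add_mul_I, hβ, Function.comp_apply]
  rw [show (n : ℝ) + 2 * α + 2 * γ + 1 = d + 2 * α by ring]
  field_simp
  ring

theorem cM1Hahn1u_of_odd (α β γ : ℝ) {n : ℕ} (hn : Odd n)
    (hD : (n : ℝ) + 2 * α + 2 * γ + 1 ≠ 0) :
    cM1Hahn1u α β γ n = (n + 4 * α + 1) * (n + 4 * γ + 1) / 4 := by
  rw [cM1Hahn1u, if_neg (Nat.not_even_iff_odd.mpr hn), mul_div_mul_right _ _ (pow_ne_zero 2 hD)]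

theorem tendsto_cM1Hahn1u_div_of_odd (β : ℝ → ℝ) (γ : ℝ) {n : ℕ} (hn : Odd n) :
    Tendsto (fun α => cM1Hahn1u α (β α) γ n / (2 * α)) atTop
      (𝓝 ((n + 4 * γ + 1) / 2)) := by
  have hD := tendsto_const_add_mul_atTop ((n : ℝ) + 2 * γ + 1) two_pos
  have hlim := (tendsto_affine_div_affine (n + 1) 0 4 one_ne_zero).const_mul ((n + 4 * γ + 1) / 8)
  rw [show ((n : ℝ) + 4 * γ + 1) / 8 * (4 / 1) = (n + 4 * γ + 1) / 2 by ring] at hlim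
  refine hlim.congr' ?_
  filter_upwards [eventually_ne_atTop 0, hD.eventually_ne_atTop 0] with α hα hDα
  rw [cM1Hahn1u_of_odd _ _ _ hn fun h => hDα (by linarith), zero_add, one_mul]
  field_simp
  ring

/-- the `h → ∞` limit of the continuous `-1` Hahn (type 1) recurrence
coefficients with parameters `(h, √(h/2)·b, (2a-1)/4)` yields the recurrence
coefficients of the monic `-1` Meixner–Pollaczek polynomials `Mₙ(x;a,b)`. -/
theorem continuousM1Hahn_to_M1MeixnerPollaczek_limit (n : ℕ) (a b : ℝ) :
    Tendsto (fun h : ℝ =>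
        cM1Hahn1b h (Real.sqrt (h / 2) * b) ((2 * a - 1) / 4) n / Real.sqrt (2 * h))
      atTop (nhds ((-1 : ℝ) ^ n * b)) ∧
    Tendsto (fun h : ℝ =>
        cM1Hahn1u h (Real.sqrt (h / 2) * b) ((2 * a - 1) / 4) n / (2 * h))
      atTop (nhds (if Even n then (n : ℝ) / 2 else ((n : ℝ) + 2 * a) / 2)) := by
  constructor
  · have hlim := (tendsto_cM1Hahn1b_one ((2 * a - 1) / 4) n).const_mul (b / 2)
    rw [show b / 2 * (2 * (-1) ^ n) = (-1) ^ n * b by ring] at hlim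
    refine hlim.congr' ?_
    filter_upwards [eventually_gt_atTop 0] with h hh
    have hsqrt : √(h / 2) ≠ 0 := (Real.sqrt_pos.mpr (by positivity)).ne'
    rw [cM1Hahn1b_eq_mul h (√(h / 2) * b), ← two_mul_sqrt_half]
    field_simp
  · split_ifs with hn
    · exact tendsto_cM1Hahn1u_div_of_even b _ hn
    · convert tendsto_cM1Hahn1u_div_of_odd (fun h => √(h / 2) * b) ((2 * a - 1) / 4)
        (Nat.not_even_iff_odd.mp hn) using 2
      ring
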